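/- arXiv:2205.07698 — 2 statements merged into one kernel-verified Lean document; each statement's English description precedes it below -/
import Mathlib

section
/- For every τ ∈ (0,1) and every s ≥ 0, τ·((1+s)^{(1−τ)/2} − 1) ≤ χ̃(s), where χ̃(s) = ∫₀^s √(ψ'(t)) dt. -/
/-- The derivative ψ'(s) = 1/((1+ln(1+|s|))²(1+|s|)). -/
noncomputable def psi' (s : ℝ) : ℝ :=
  1 / ((1 + Real.log (1 + |s|)) ^ 2 * (1 + |s|))

/-- χ̃(s) = ∫₀^s √(ψ'(t)) dt. -/
noncomputable def chit (s : ℝ) : ℝ :=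
  ∫ t in (0:ℝ)..s, Real.sqrt (psi' t)

/-!
On `[0, ∞)` we have `√ψ'(t) = 1 / ((1 + log (1 + t)) √(1 + t))`, and `log y ≤ y - 1` at
`y = (1 + t)^ε` gives `ε (1 + log (1 + t)) ≤ (1 + t)^ε` for `ε ≤ 1`. Hence
`√ψ'(t) ≥ ε (1 + t)^(-1/2 - ε)`, and integrating over `[0, s]` with `ε = τ/2` yields
`χ̃(s) ≥ τ/(1 - τ) · ((1 + s)^((1 - τ)/2) - 1)`, which is at least the claimed bound.
-/

lemma mul_one_add_log_le_rpow {x ε : ℝ} (hx : 0 < x) (hε : ε ≤ 1) :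
    ε * (1 + Real.log x) ≤ x ^ ε := by
  have h := Real.log_le_sub_one_of_pos (Real.rpow_pos_of_pos hx ε)
  rw [Real.log_rpow hx] at h
  linarith

lemma one_add_log_one_add_abs_pos (t : ℝ) : 0 < 1 + Real.log (1 + |t|) := by
  have := Real.log_nonneg (le_add_of_nonneg_right (abs_nonneg t))
  linarith

lemma continuous_psi' : Continuous psi' := by
  have hlog : Continuous fun t : ℝ => Real.log (1 + |t|) :=
    (by fun_prop : Continuous fun t : ℝ => 1 + |t|).log fun t => by positivity
  refine continuous_const.div (by fun_prop) fun t => ?_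
  have := one_add_log_one_add_abs_pos t
  positivity

lemma sqrt_psi'_of_nonneg {t : ℝ} (ht : 0 ≤ t) :
    √(psi' t) = ((1 + Real.log (1 + t)) * √(1 + t))⁻¹ := by
  have hL := one_add_log_one_add_abs_pos t
  rw [abs_of_nonneg ht] at hL
  rw [psi', abs_of_nonneg ht, one_div, Real.sqrt_inv, Real.sqrt_mul (sq_nonneg _),
    Real.sqrt_sq hL.le]

lemma mul_one_add_rpow_le_sqrt_psi' {ε t : ℝ} (hε : ε ≤ 1) (ht : 0 ≤ t) :
    ε * (1 + t) ^ (-(1 / 2) - ε) ≤ √(psi' t) := by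
  have h1t : 0 < 1 + t := by linarith
  have hL : 0 < 1 + Real.log (1 + t) := by
    simpa [abs_of_nonneg ht] using one_add_log_one_add_abs_pos t
  have hS : 0 < √(1 + t) := Real.sqrt_pos.mpr h1t
  have hP : 0 < (1 + t) ^ ε := Real.rpow_pos_of_pos h1t ε
  have hpow : (1 + t) ^ (-(1 / 2) - ε) = ((1 + t) ^ ε * √(1 + t))⁻¹ := by
    rw [Real.sqrt_eq_rpow, ← Real.rpow_add h1t, ← Real.rpow_neg h1t.le]
    ring_nf
  rw [sqrt_psi'_of_nonneg ht, hpow, ← div_eq_mul_inv, ← one_div,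
    div_le_div_iff₀ (mul_pos hP hS) (mul_pos hL hS), one_mul, ← mul_assoc]
  exact mul_le_mul_of_nonneg_right (mul_one_add_log_le_rpow h1t hε) hS.le

lemma integral_one_add_rpow {r : ℝ} (hr : -1 < r) (s : ℝ) :
    ∫ t in (0:ℝ)..s, (1 + t) ^ r = ((1 + s) ^ (r + 1) - 1) / (r + 1) := by
  rw [intervalIntegral.integral_comp_add_left (fun x : ℝ => x ^ r), integral_rpow (Or.inl hr),
    add_zero, Real.one_rpow]

lemma div_mul_one_add_rpow_sub_one_le_chit {ε s : ℝ} (hε : ε < 1 / 2)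
    (hs : 0 ≤ s) : ε / (1 / 2 - ε) * ((1 + s) ^ (1 / 2 - ε) - 1) ≤ chit s := by
  have hr : -1 < -(1 / 2) - ε := by linarith
  have hexp : -(1 / 2) - ε + 1 = 1 / 2 - ε := by ring
  have hint : IntervalIntegrable (fun t : ℝ => ε * (1 + t) ^ (-(1 / 2) - ε))
      MeasureTheory.volume 0 s := by
    refine ContinuousOn.intervalIntegrable_of_Icc hs fun t ht => ?_
    have h1t : 1 + t ≠ 0 := by linarith [ht.1]
    exact ((ContinuousAt.rpow_const (by fun_prop) (Or.inl h1t)).const_mul ε).continuousWithinAt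
  calc ε / (1 / 2 - ε) * ((1 + s) ^ (1 / 2 - ε) - 1)
      = ∫ t in (0:ℝ)..s, ε * (1 + t) ^ (-(1 / 2) - ε) := by
        rw [intervalIntegral.integral_const_mul, integral_one_add_rpow hr, hexp]
        ring
    _ ≤ chit s := intervalIntegral.integral_mono_on hs hint
        ((Real.continuous_sqrt.comp continuous_psi').intervalIntegrable 0 s)
        fun t ht => mul_one_add_rpow_le_sqrt_psi' (by linarith) ht.1

theorem stmt_9 (τ : ℝ) (hτ : τ ∈ Set.Ioo (0 : ℝ) 1) (s : ℝ) (hs : 0 ≤ s) :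
    τ * ((1 + s) ^ ((1 - τ) / 2) - 1) ≤ chit s := by
  obtain ⟨hτ₀, hτ₁⟩ := hτ
  have hexp : (1 - τ) / 2 = 1 / 2 - τ / 2 := by ring
  have hcoef : τ ≤ τ / 2 / (1 / 2 - τ / 2) := by
    rw [le_div_iff₀ (by linarith)]
    nlinarith
  have hgrowth : 0 ≤ (1 + s) ^ ((1 - τ) / 2) - 1 :=
    sub_nonneg.mpr (Real.one_le_rpow (by linarith) (by linarith))
  rw [hexp] at hgrowth ⊢
  calc τ * ((1 + s) ^ (1 / 2 - τ / 2) - 1)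
      ≤ τ / 2 / (1 / 2 - τ / 2) * ((1 + s) ^ (1 / 2 - τ / 2) - 1) :=
        mul_le_mul_of_nonneg_right hcoef hgrowth
    _ ≤ chit s := div_mul_one_add_rpow_sub_one_le_chit (by linarith) hs
end

section
/- The function χ̃(s) = ∫₀^s √(ψ'(t)) dt is odd, strictly increasing, and is a bijection from ℝ onto ℝ. -/
/-!
The integrand `√ψ'` is even, continuous and positive, so its primitive `χ̃` from `0` is odd,
continuous and strictly increasing. For `t ≥ 0` one has `1 + log (1 + t) ≤ 2 √(1 + t)`, hence
`√ψ'(t) ≥ 1 / (2 (1 + t))` and `χ̃ s ≥ log (1 + s) / 2 → ∞`; by oddness `χ̃ → -∞` at `-∞`,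
and the intermediate value theorem gives surjectivity.
-/

open Real Filter MeasureTheory intervalIntegral

theorem Function.Odd.tendsto_atBot_atBot {α β : Type*} [AddCommGroup α] [PartialOrder α]
    [IsOrderedAddMonoid α] [AddCommGroup β] [PartialOrder β] [IsOrderedAddMonoid β]
    {f : α → β} (hf : f.Odd) (h : Tendsto f atTop atTop) : Tendsto f atBot atBot := by
  have h' := tendsto_neg_atTop_atBot.comp (h.comp tendsto_neg_atBot_atTop)
  convert h' using 1
  ext x
  simp [hf x]

section Primitive

variable {f : ℝ → ℝ}

theorem Function.Even.odd_primitive (hf : f.Even) :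
    Function.Odd fun s => ∫ t in (0:ℝ)..s, f t := by
  intro s
  have h := integral_comp_neg (a := 0) (b := s) f
  simp only [hf _, neg_zero] at h
  dsimp only
  rw [h, integral_symm]

theorem strictMono_primitive_of_pos (hf : Continuous f) (hpos : ∀ t, 0 < f t) (a : ℝ) :
    StrictMono fun s => ∫ t in a..s, f t := by
  intro b c hbc
  have hint (x y : ℝ) : IntervalIntegrable f volume x y := hf.intervalIntegrable x y
  have hsplit := integral_add_adjacent_intervals (hint a b) (hint b c)
  have hgap := intervalIntegral_pos_of_pos (hint b c) hpos hbc
  simp only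
  linarith

end Primitive

theorem one_add_log_sq_le {x : ℝ} (hx : 1 ≤ x) : (1 + log x) ^ 2 ≤ 4 * x := by
  have hsqrt_pos : 0 < √x := sqrt_pos.2 (by linarith)
  have hlog : log x ≤ 2 * (√x - 1) := by
    have := log_le_sub_one_of_pos hsqrt_pos
    rw [log_sqrt (by linarith)] at this
    linarith
  have := log_nonneg hx
  nlinarith [sq_sqrt (show 0 ≤ x by linarith)]

theorem psi'_pos (s : ℝ) : 0 < psi' s := by
  have := log_nonneg (show (1 : ℝ) ≤ 1 + |s| by simp)
  unfold psi'
  positivity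

theorem even_sqrt_psi' : Function.Even fun t => √(psi' t) := by
  intro t
  simp [psi']

theorem continuous_sqrt_psi' : Continuous fun t => √(psi' t) := by
  have hlog : Continuous fun s : ℝ => log (1 + |s|) :=
    (continuous_const.add continuous_abs).log fun s => (by positivity : (0 : ℝ) < 1 + |s|).ne'
  refine Continuous.sqrt (continuous_const.div (by fun_prop) fun s => ?_)
  have := log_nonneg (show (1 : ℝ) ≤ 1 + |s| by simp)
  positivity

theorem inv_one_add_div_two_le_sqrt_psi' {t : ℝ} (ht : 0 ≤ t) :
    (1 + t)⁻¹ / 2 ≤ √(psi' t) := by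
  have h1t : 0 < 1 + t := by linarith
  have hlog := one_add_log_sq_le (show 1 ≤ 1 + t by linarith)
  have := log_nonneg (show 1 ≤ 1 + t by linarith)
  rw [le_sqrt (by positivity) (psi'_pos t).le, psi', abs_of_nonneg ht]
  calc ((1 + t)⁻¹ / 2) ^ 2 = 1 / (4 * (1 + t) * (1 + t)) := by field_simp; ring
    _ ≤ 1 / ((1 + log (1 + t)) ^ 2 * (1 + t)) :=
      one_div_le_one_div_of_le (by positivity) (by nlinarith)

theorem half_log_one_add_le_chit {s : ℝ} (hs : 0 ≤ s) : log (1 + s) / 2 ≤ chit s := by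
  have hprimitive : ∫ t in (0:ℝ)..s, (1 + t)⁻¹ / 2 = log (1 + s) / 2 := by
    simp only [intervalIntegral.integral_div, integral_comp_add_left (fun x => x⁻¹), add_zero]
    rw [integral_inv_of_pos one_pos (by linarith), div_one]
  have hint_inv : IntervalIntegrable (fun t : ℝ => (1 + t)⁻¹ / 2) volume 0 s := by
    refine ContinuousOn.intervalIntegrable fun t ht => ?_
    rw [Set.uIcc_of_le hs] at ht
    have hne : 1 + t ≠ 0 := by linarith [ht.1]
    fun_prop (disch := assumption)
  rw [← hprimitive]
  exact integral_mono_on hs hint_inv (continuous_sqrt_psi'.intervalIntegrable 0 s)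
    fun t ht => inv_one_add_div_two_le_sqrt_psi' ht.1

theorem tendsto_chit_atTop : Tendsto chit atTop atTop := by
  have hlog : Tendsto (fun s : ℝ => log (1 + s) / 2) atTop atTop :=
    (tendsto_log_atTop.comp (tendsto_atTop_add_const_left _ 1 tendsto_id)).atTop_div_const
      two_pos
  exact tendsto_atTop_mono' atTop ((eventually_ge_atTop 0).mono fun s hs =>
    half_log_one_add_le_chit hs) hlog

theorem stmt_10 :
    (∀ s : ℝ, chit (-s) = - chit s) ∧
    StrictMono chit ∧
    Function.Bijective chit := by
  have hodd : Function.Odd chit := even_sqrt_psi'.odd_primitive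
  have hmono : StrictMono chit :=
    strictMono_primitive_of_pos continuous_sqrt_psi' (fun t => sqrt_pos.2 (psi'_pos t)) 0
  have hcont : Continuous chit :=
    continuous_primitive (fun a b => continuous_sqrt_psi'.intervalIntegrable a b) 0
  exact ⟨hodd, hmono, hmono.injective,
    hcont.surjective tendsto_chit_atTop (hodd.tendsto_atBot_atBot tendsto_chit_atTop)⟩
end
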